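/- There exists a constant c > 0 depending only on d such that for every R > 1, every closed subset S ⊆ [−R,R]^d, and every ε > 0, the number of connected components of [−R,R]^d \ S whose Lebesgue volume is at least ε is bounded above by K(S)·(ε^{−1} + 1) + c·R^{d−1}, where K(S) is the number of lattice cubes [0,1]^d + k (k ∈ ℤ^d) intersecting S. -/

import Mathlib

open MeasureTheory

/-- The cube `[-R,R]^d` in Euclidean space. -/
def cube (d : ℕ) (R : ℝ) : Set (EuclideanSpace ℝ (Fin d)) := {x | ∀ i, |x i| ≤ R}

/-- The unit lattice cube `[0,1]^d + k`. -/
def latticeCube (d : ℕ) (k : Fin d → ℤ) : Set (EuclideanSpace ℝ (Fin d)) :=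
  {x | ∀ i, (k i : ℝ) ≤ x i ∧ x i ≤ (k i : ℝ) + 1}

/-- The number of unit lattice cubes met by `S`. -/
noncomputable def latticeCount (d : ℕ) (S : Set (EuclideanSpace ℝ (Fin d))) : ℕ :=
  Set.ncard {k : Fin d → ℤ | (S ∩ latticeCube d k).Nonempty}

/-!
Split the large components into those meeting no `S`-free lattice cube and the others. The first
kind lie in the union of the `K(S)` cubes meeting `S` and are disjoint of volume `≥ ε`, so there are
at most `K(S)/ε` of them. A component `C` of the second kind contains `Q_k ∩ [-R,R]^d` for every
free cube `Q_k` it meets, hence is determined by the free `Q_k` meeting it with the largest `k₀`.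
Unless `k` lies in the top layer `k₀ = ⌊R⌋` (at most `(2⌊R⌋ + 2)^(d-1) ≤ (4R)^(d-1)` cells), the
common face of `Q_k` and `Q_{k+e₀}` meets `[-R,R]^d`, so `Q_{k+e₀}` meets `C` and, by maximality,
meets `S`: at most `K(S)` further choices.
-/
open Set

section Topology

variable {X : Type*} [TopologicalSpace X]

theorem inter_closure_connectedComponentIn (F : Set X) (x : X) :
    F ∩ closure (connectedComponentIn F x) = connectedComponentIn F x := by
  refine Subset.antisymm ?_ (subset_inter (connectedComponentIn_subset F x) subset_closure)
  by_cases hx : x ∈ F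
  · exact (isPreconnected_connectedComponentIn.subset_closure
      (subset_inter (connectedComponentIn_subset F x) subset_closure)
      inter_subset_right).subset_connectedComponentIn
      ⟨hx, subset_closure (mem_connectedComponentIn hx)⟩ inter_subset_left
  · simp [connectedComponentIn_eq_empty hx]

theorem MeasurableSet.connectedComponentIn [MeasurableSpace X] [OpensMeasurableSpace X]
    {F : Set X} (hF : MeasurableSet F) (x : X) : MeasurableSet (connectedComponentIn F x) := by
  rw [← inter_closure_connectedComponentIn]
  exact hF.inter isClosed_closure.measurableSet

theorem IsPreconnected.subset_connectedComponentIn_of_inter {T F : Set X} {x : X}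
    (hT : IsPreconnected T) (hTF : T ⊆ F) (hne : (T ∩ _root_.connectedComponentIn F x).Nonempty) :
    T ⊆ _root_.connectedComponentIn F x := by
  obtain ⟨y, hyT, hy⟩ := hne
  rw [connectedComponentIn_eq hy]
  exact hT.subset_connectedComponentIn hyT hTF

theorem connectedComponentIn_eq_of_inter_nonempty {F : Set X} {x y : X}
    (h : (connectedComponentIn F x ∩ connectedComponentIn F y).Nonempty) :
    connectedComponentIn F x = connectedComponentIn F y := by
  obtain ⟨z, hzx, hzy⟩ := h
  rw [connectedComponentIn_eq hzx, connectedComponentIn_eq hzy]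

theorem pairwiseDisjoint_of_forall_eq_connectedComponentIn {𝒜 : Set (Set X)} {F : Set X}
    (h : ∀ C ∈ 𝒜, ∃ x, C = connectedComponentIn F x) : 𝒜.PairwiseDisjoint id := by
  intro C hC C' hC' hne
  obtain ⟨x, rfl⟩ := h C hC
  obtain ⟨x', rfl⟩ := h C' hC'
  by_contra hnd
  exact hne (connectedComponentIn_eq_of_inter_nonempty (not_disjoint_iff_nonempty_inter.1 hnd))

end Topology

theorem encard_mul_le_measure_sUnion {α : Type*} [MeasurableSpace α] (μ : Measure α)
    {𝒜 : Set (Set α)} {ε : ENNReal} (hmeas : ∀ A ∈ 𝒜, MeasurableSet A)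
    (hdisj : 𝒜.PairwiseDisjoint id) (hε : ∀ A ∈ 𝒜, ε ≤ μ A) :
    𝒜.encard * ε ≤ μ (⋃₀ 𝒜) := by
  rw [← ENNReal.tsum_set_const, sUnion_eq_iUnion]
  calc ∑' _ : 𝒜, ε ≤ ∑' A : 𝒜, μ A := ENNReal.tsum_le_tsum fun A => hε A A.2
    _ ≤ μ (⋃ A : 𝒜, A) := tsum_meas_le_meas_iUnion_of_disjoint μ (fun A => hmeas A A.2)
        fun A B hAB => hdisj A.2 B.2 (Subtype.coe_injective.ne hAB)

theorem ncard_setOf_apply_eq_le {ι α : Type*} [Fintype ι] (s : Finset α)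
    (i : ι) (b : α) :
    {k : ι → α | k i = b ∧ ∀ j, k j ∈ s}.ncard ≤ s.card ^ (Fintype.card ι - 1) := by
  classical
  calc {k : ι → α | k i = b ∧ ∀ j, k j ∈ s}.ncard
      ≤ (Fintype.piFinset (Function.update (fun _ => s) i {b})).card := by
        rw [← ncard_coe_finset]
        refine ncard_le_ncard (fun k ⟨hki, hk⟩ => ?_) (Finset.finite_toSet _)
        rw [Finset.mem_coe, Fintype.mem_piFinset]
        intro j
        rcases eq_or_ne j i with rfl | hj
        · simp [hki]
        · simpa [Function.update_of_ne hj] using hk j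
    _ ≤ s.card ^ (Fintype.card ι - 1) := by
        rw [Fintype.card_piFinset, ← Finset.mul_prod_erase _ _ (Finset.mem_univ i),
          Function.update_self, Finset.card_singleton, one_mul,
          Finset.prod_congr rfl fun j hj =>
            by rw [Function.update_of_ne (Finset.ne_of_mem_erase hj)],
          Finset.prod_const, Finset.card_erase_of_mem (Finset.mem_univ i), Finset.card_univ]

section Lattice

variable {d : ℕ}

theorem cube_eq_preimage_ofLp (R : ℝ) :
    cube d R = WithLp.ofLp ⁻¹' Icc (fun _ => -R) (fun _ => R) := by
  ext x
  simp [cube, Pi.le_def, abs_le, forall_and]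

theorem latticeCube_eq_preimage_ofLp (k : Fin d → ℤ) :
    latticeCube d k = WithLp.ofLp ⁻¹' Icc (fun i => (k i : ℝ)) (fun i => (k i : ℝ) + 1) := by
  ext x
  simp [latticeCube, Pi.le_def, forall_and]

theorem convex_cube (R : ℝ) : Convex ℝ (cube d R) := by
  rw [cube_eq_preimage_ofLp]
  exact (convex_Icc _ _).linear_preimage (WithLp.linearEquiv 2 ℝ (Fin d → ℝ)).toLinearMap

theorem convex_latticeCube (k : Fin d → ℤ) : Convex ℝ (latticeCube d k) := by
  rw [latticeCube_eq_preimage_ofLp]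
  exact (convex_Icc _ _).linear_preimage (WithLp.linearEquiv 2 ℝ (Fin d → ℝ)).toLinearMap

theorem isClosed_cube (R : ℝ) : IsClosed (cube d R) := by
  rw [cube_eq_preimage_ofLp]
  exact isClosed_Icc.preimage (PiLp.continuous_ofLp 2 _)

theorem volume_latticeCube (k : Fin d → ℤ) : volume (latticeCube d k) = 1 := by
  rw [latticeCube_eq_preimage_ofLp,
    (PiLp.volume_preserving_ofLp _).measure_preimage measurableSet_Icc.nullMeasurableSet,
    Real.volume_Icc_pi]
  simp

theorem volume_biUnion_latticeCube_le (s : Set (Fin d → ℤ)) :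
    volume (⋃ k ∈ s, latticeCube d k) ≤ s.encard := by
  calc volume (⋃ k ∈ s, latticeCube d k) ≤ ∑' k : s, volume (latticeCube d k) :=
        measure_biUnion_le _ s.to_countable _
    _ = s.encard := by simp only [volume_latticeCube, ENNReal.tsum_set_one]

theorem mem_latticeCube_floor (x : EuclideanSpace ℝ (Fin d)) :
    x ∈ latticeCube d (fun i => ⌊x i⌋) :=
  fun _ => ⟨Int.floor_le _, (Int.lt_floor_add_one _).le⟩

theorem mem_Icc_floor_of_latticeCube_inter_cube_nonempty {R : ℝ} {k : Fin d → ℤ}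
    (h : (latticeCube d k ∩ cube d R).Nonempty) (i : Fin d) :
    k i ∈ Finset.Icc (-⌊R⌋ - 1) ⌊R⌋ := by
  obtain ⟨x, hxk, hxR⟩ := h
  obtain ⟨hlo, hhi⟩ := hxk i
  obtain ⟨hRlo, hRhi⟩ := abs_le.1 (hxR i)
  have : -k i - 1 ≤ ⌊R⌋ := Int.le_floor.2 (by push_cast; linarith)
  have : k i ≤ ⌊R⌋ := Int.le_floor.2 (by linarith)
  rw [Finset.mem_Icc]
  omega

theorem finite_setOf_latticeCube_inter_cube_nonempty (R : ℝ) :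
    {k : Fin d → ℤ | (latticeCube d k ∩ cube d R).Nonempty}.Finite :=
  (Set.Finite.pi fun _ => (Finset.Icc (-⌊R⌋ - 1) ⌊R⌋).finite_toSet).subset
    fun _ hk i _ => mem_Icc_floor_of_latticeCube_inter_cube_nonempty hk i

theorem finite_setOf_inter_latticeCube_nonempty {R : ℝ} {S : Set (EuclideanSpace ℝ (Fin d))}
    (hSR : S ⊆ cube d R) : {k : Fin d → ℤ | (S ∩ latticeCube d k).Nonempty}.Finite :=
  (finite_setOf_latticeCube_inter_cube_nonempty R).subset fun _ ⟨y, hyS, hyk⟩ => ⟨y, hyk, hSR hyS⟩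

theorem card_Icc_floor_le {R : ℝ} (hR : 1 ≤ R) :
    ((Finset.Icc (-⌊R⌋ - 1) ⌊R⌋).card : ℝ) ≤ 4 * R := by
  have h0 : 0 ≤ ⌊R⌋ := Int.floor_nonneg.2 (by linarith)
  have hcard : ((Finset.Icc (-⌊R⌋ - 1) ⌊R⌋).card : ℤ) = 2 * ⌊R⌋ + 2 := by
    rw [Int.card_Icc, Int.toNat_of_nonneg (by omega)]
    ring
  have : ((Finset.Icc (-⌊R⌋ - 1) ⌊R⌋).card : ℝ) = 2 * ⌊R⌋ + 2 := by exact_mod_cast hcard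
  linarith [Int.floor_le R]

end Lattice

section Components

variable {d : ℕ} {R : ℝ} {S : Set (EuclideanSpace ℝ (Fin d))}

theorem latticeCube_inter_cube_subset_connectedComponentIn {k : Fin d → ℤ}
    {x : EuclideanSpace ℝ (Fin d)} (hk : Disjoint S (latticeCube d k))
    (hne : (latticeCube d k ∩ connectedComponentIn (cube d R \ S) x).Nonempty) :
    latticeCube d k ∩ cube d R ⊆ connectedComponentIn (cube d R \ S) x := by
  refine ((convex_latticeCube k).inter (convex_cube R)).isPreconnected
    |>.subset_connectedComponentIn_of_inter (fun y ⟨hyk, hyR⟩ => ⟨hyR, fun hyS => ?_⟩) ?_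
  · exact hk.ne_of_mem hyS hyk rfl
  · obtain ⟨y, hyk, hyC⟩ := hne
    exact ⟨y, ⟨hyk, (connectedComponentIn_subset _ _ hyC).1⟩, hyC⟩

theorem exists_mem_latticeCube_add_single {k : Fin d → ℤ} {p : EuclideanSpace ℝ (Fin d)}
    (hp : p ∈ latticeCube d k ∩ cube d R) {i : Fin d} (hki : k i < ⌊R⌋) :
    ∃ q ∈ latticeCube d k ∩ cube d R, q ∈ latticeCube d (k + Pi.single i 1) := by
  have hkR : (k i : ℝ) + 1 ≤ R := by
    have := Int.floor_le R
    have : (k i : ℝ) + 1 ≤ ⌊R⌋ := by exact_mod_cast hki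
    linarith
  refine ⟨WithLp.toLp 2 (Function.update (WithLp.ofLp p) i (k i + 1)),
    ⟨fun j => ?_, fun j => ?_⟩, fun j => ?_⟩ <;> rcases eq_or_ne j i with rfl | hj
  · simp
  · simpa [hj] using hp.1 j
  · have := (hp.1 j).2
    have := abs_le.1 (hp.2 j)
    simp only [Function.update_self, abs_le]
    constructor <;> linarith
  · simpa [hj] using hp.2 j
  · simp
  · simpa [hj] using hp.1 j

theorem exists_topmost_free_latticeCube (i : Fin d) {x : EuclideanSpace ℝ (Fin d)}
    (h : ∃ k, Disjoint S (latticeCube d k) ∧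
      (latticeCube d k ∩ connectedComponentIn (cube d R \ S) x).Nonempty) :
    ∃ k, Disjoint S (latticeCube d k) ∧
      (latticeCube d k ∩ connectedComponentIn (cube d R \ S) x).Nonempty ∧
      ((k i = ⌊R⌋ ∧ ∀ j, k j ∈ Finset.Icc (-⌊R⌋ - 1) ⌊R⌋) ∨
        (S ∩ latticeCube d (k + Pi.single i 1)).Nonempty) := by
  set C := connectedComponentIn (cube d R \ S) x
  have hmeets : ∀ k, (latticeCube d k ∩ C).Nonempty → (latticeCube d k ∩ cube d R).Nonempty :=
    fun k ⟨y, hyk, hyC⟩ => ⟨y, hyk, (connectedComponentIn_subset _ _ hyC).1⟩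
  obtain ⟨k, ⟨hkS, hkC⟩, hmax⟩ := Set.exists_max_image
    {k | Disjoint S (latticeCube d k) ∧ (latticeCube d k ∩ C).Nonempty} (fun k => k i)
    ((finite_setOf_latticeCube_inter_cube_nonempty R).subset fun k hk => hmeets k hk.2) h
  have hbounds := mem_Icc_floor_of_latticeCube_inter_cube_nonempty (hmeets k hkC)
  refine ⟨k, hkS, hkC, ?_⟩
  rcases (Finset.mem_Icc.1 (hbounds i)).2.eq_or_lt with hki | hki
  · exact Or.inl ⟨hki, hbounds⟩
  right
  obtain ⟨p, hpk, hpC⟩ := hkC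
  obtain ⟨q, hqk, hq⟩ :=
    exists_mem_latticeCube_add_single ⟨hpk, (connectedComponentIn_subset _ _ hpC).1⟩ hki
  have hqC : q ∈ C := latticeCube_inter_cube_subset_connectedComponentIn hkS ⟨p, hpk, hpC⟩ hqk
  by_contra hfree
  rw [not_nonempty_iff_eq_empty, ← disjoint_iff_inter_eq_empty] at hfree
  have := hmax _ ⟨hfree, q, hq, hqC⟩
  simp at this

theorem ncard_le_of_forall_meets_free_latticeCube (hSR : S ⊆ cube d R) (i : Fin d)
    {𝒟 : Set (Set (EuclideanSpace ℝ (Fin d)))}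
    (h𝒟 : ∀ C ∈ 𝒟, (∃ x ∈ cube d R \ S, C = connectedComponentIn (cube d R \ S) x) ∧
      ∃ k, Disjoint S (latticeCube d k) ∧ (latticeCube d k ∩ C).Nonempty) :
    𝒟.ncard ≤ (Finset.Icc (-⌊R⌋ - 1) ⌊R⌋).card ^ (d - 1) + latticeCount d S := by
  set top := {k : Fin d → ℤ | k i = ⌊R⌋ ∧ ∀ j, k j ∈ Finset.Icc (-⌊R⌋ - 1) ⌊R⌋}
  set SC := {k : Fin d → ℤ | (S ∩ latticeCube d k).Nonempty}
  have hshift : Function.Injective fun k : Fin d → ℤ => k + Pi.single i 1 := add_left_injective _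
  have htop : ∀ C ∈ 𝒟, ∃ k, Disjoint S (latticeCube d k) ∧ (latticeCube d k ∩ C).Nonempty ∧
      k ∈ top ∪ (fun k => k + Pi.single i 1) ⁻¹' SC := by
    rintro C hC
    obtain ⟨⟨x, -, rfl⟩, hfree⟩ := h𝒟 C hC
    exact exists_topmost_free_latticeCube i hfree
  choose! f hfree hmeets hmem using htop
  have hinj : InjOn f 𝒟 := by
    intro C hC C' hC' heq
    obtain ⟨⟨x, -, rfl⟩, -⟩ := h𝒟 C hC
    obtain ⟨⟨x', -, rfl⟩, -⟩ := h𝒟 C' hC'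
    obtain ⟨y, hyk, hyC⟩ := hmeets _ hC
    rw [heq] at hyk
    exact connectedComponentIn_eq_of_inter_nonempty ⟨y, hyC,
      latticeCube_inter_cube_subset_connectedComponentIn (hfree _ hC') (hmeets _ hC')
        ⟨hyk, (connectedComponentIn_subset _ _ hyC).1⟩⟩
  calc 𝒟.ncard ≤ (top ∪ (fun k => k + Pi.single i 1) ⁻¹' SC).ncard := by
        refine ncard_le_ncard_of_injOn f hmem hinj (Finite.union ?_ ?_)
        · exact (Finite.pi fun _ => (Finset.Icc (-⌊R⌋ - 1) ⌊R⌋).finite_toSet).subset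
            fun k hk j _ => hk.2 j
        · exact (finite_setOf_inter_latticeCube_nonempty hSR).preimage hshift.injOn
    _ ≤ top.ncard + ((fun k => k + Pi.single i 1) ⁻¹' SC).ncard := ncard_union_le _ _
    _ ≤ (Finset.Icc (-⌊R⌋ - 1) ⌊R⌋).card ^ (d - 1) + latticeCount d S := by
        rw [ncard_preimage_of_injective_subset_range hshift
          fun k _ => ⟨k - Pi.single i 1, sub_add_cancel _ _⟩]
        have := ncard_setOf_apply_eq_le (Finset.Icc (-⌊R⌋ - 1) ⌊R⌋) i ⌊R⌋
        rw [Fintype.card_fin] at this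
        exact Nat.add_le_add_right this _

theorem ncard_mul_le_latticeCount (hS : IsClosed S) (hSR : S ⊆ cube d R) {ε : ℝ} (hε : 0 < ε)
    {𝒜 : Set (Set (EuclideanSpace ℝ (Fin d)))}
    (h𝒜 : ∀ C ∈ 𝒜, ((∃ x ∈ cube d R \ S, C = connectedComponentIn (cube d R \ S) x) ∧
      ε ≤ (volume C).toReal) ∧
      ¬ ∃ k, Disjoint S (latticeCube d k) ∧ (latticeCube d k ∩ C).Nonempty) :
    (𝒜.ncard : ℝ) * ε ≤ latticeCount d S := by
  set SC := {k : Fin d → ℤ | (S ∩ latticeCube d k).Nonempty}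
  have hSC : SC.Finite := finite_setOf_inter_latticeCube_nonempty hSR
  have hcover : ⋃₀ 𝒜 ⊆ ⋃ k ∈ SC, latticeCube d k := by
    rintro y ⟨C, hC, hyC⟩
    refine mem_biUnion (x := fun i => ⌊y i⌋) ?_ (mem_latticeCube_floor y)
    by_contra hfree
    rw [mem_ofPred, not_nonempty_iff_eq_empty, ← disjoint_iff_inter_eq_empty] at hfree
    exact (h𝒜 C hC).2 ⟨_, hfree, y, mem_latticeCube_floor y, hyC⟩
  have hF : MeasurableSet (cube d R \ S) := (isClosed_cube R).measurableSet.diff hS.measurableSet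
  have hcomp : ∀ C ∈ 𝒜, ∃ x, C = connectedComponentIn (cube d R \ S) x := fun C hC =>
    let ⟨x, _, hx⟩ := (h𝒜 C hC).1.1
    ⟨x, hx⟩
  have hvol : 𝒜.encard * ENNReal.ofReal ε ≤ latticeCount d S := calc
    _ ≤ volume (⋃₀ 𝒜) := by
        refine encard_mul_le_measure_sUnion volume (fun C hC => ?_)
          (pairwiseDisjoint_of_forall_eq_connectedComponentIn hcomp)
          fun C hC => ENNReal.ofReal_le_of_le_toReal (h𝒜 C hC).1.2
        obtain ⟨x, rfl⟩ := hcomp C hC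
        exact hF.connectedComponentIn x
    _ ≤ volume (⋃ k ∈ SC, latticeCube d k) := measure_mono hcover
    _ ≤ SC.encard := volume_biUnion_latticeCube_le SC
    _ = latticeCount d S := by rw [latticeCount, ← hSC.cast_ncard_eq]; rfl
  have h𝒜 : 𝒜.Finite := by
    refine encard_ne_top_iff.1 fun htop => ?_
    rw [htop, ENat.toENNReal_top, ENNReal.top_mul (ENNReal.ofReal_pos.2 hε).ne'] at hvol
    exact ENNReal.natCast_ne_top _ (top_le_iff.1 hvol)
  rw [← h𝒜.cast_ncard_eq] at hvol
  have := ENNReal.toReal_mono (ENNReal.natCast_ne_top _) hvol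
  simpa [ENNReal.toReal_mul, hε.le] using this

end Components

/-- There is `c > 0` (depending only on `d`) such that for all `R > 1`, closed
`S ⊆ [-R,R]^d` and `ε > 0`, the number of connected components of `[-R,R]^d \ S`
of volume at least `ε` is at most `K(S)·(ε⁻¹ + 1) + c·R^{d-1}`. -/
theorem components_volume_bound (d : ℕ) (hd : 1 ≤ d) :
    ∃ c > 0, ∀ R : ℝ, 1 < R →
      ∀ S : Set (EuclideanSpace ℝ (Fin d)), IsClosed S → S ⊆ cube d R →
      ∀ ε : ℝ, 0 < ε →
      (Set.ncard {C : Set (EuclideanSpace ℝ (Fin d)) |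
          (∃ x ∈ cube d R \ S, C = connectedComponentIn (cube d R \ S) x) ∧
          ε ≤ (volume C).toReal} : ℝ)
        ≤ (latticeCount d S : ℝ) * (ε⁻¹ + 1) + c * R ^ (d - 1) := by
  refine ⟨4 ^ (d - 1), by positivity, fun R hR S hS hSR ε hε => ?_⟩
  set 𝒞 := {C : Set (EuclideanSpace ℝ (Fin d)) |
    (∃ x ∈ cube d R \ S, C = connectedComponentIn (cube d R \ S) x) ∧ ε ≤ (volume C).toReal}
  set meetsFree := {C : Set (EuclideanSpace ℝ (Fin d)) |
    ∃ k, Disjoint S (latticeCube d k) ∧ (latticeCube d k ∩ C).Nonempty}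
  have hinside : ((𝒞 \ meetsFree).ncard : ℝ) ≤ latticeCount d S * ε⁻¹ := by
    rw [← div_eq_mul_inv, le_div_iff₀ hε]
    exact ncard_mul_le_latticeCount hS hSR hε fun C hC => hC
  have hfree :
      ((𝒞 ∩ meetsFree).ncard : ℝ) ≤ latticeCount d S + 4 ^ (d - 1) * R ^ (d - 1) := by
    calc _ ≤ ((Finset.Icc (-⌊R⌋ - 1) ⌊R⌋).card : ℝ) ^ (d - 1) + latticeCount d S := by
          exact_mod_cast ncard_le_of_forall_meets_free_latticeCube hSR ⟨0, hd⟩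
            fun C (hC : C ∈ 𝒞 ∩ meetsFree) => ⟨hC.1.1, hC.2⟩
      _ ≤ (4 * R) ^ (d - 1) + latticeCount d S := by
          gcongr
          exact card_Icc_floor_le hR.le
      _ = _ := by rw [mul_pow]; ring
  calc (𝒞.ncard : ℝ) = ((𝒞 \ meetsFree) ∪ (𝒞 ∩ meetsFree)).ncard := by
        rw [union_comm, inter_union_sdiff]
    _ ≤ (𝒞 \ meetsFree).ncard + (𝒞 ∩ meetsFree).ncard := by exact_mod_cast ncard_union_le _ _
    _ ≤ latticeCount d S * ε⁻¹ + (latticeCount d S + 4 ^ (d - 1) * R ^ (d - 1)) :=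
        add_le_add hinside hfree
    _ = _ := by ring
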